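/- Let p_a, p_b, p_i, p_c ∈ ℝ² be four points, no three collinear, with strictly increasing x-coordinates in the order p_a, p_b, p_i, p_c. Then p_i lies in the interior of the triangle with vertices p_a, p_b, p_c if and only if both of the following hold: if (p_a, p_b, p_c) is positively oriented then (p_a, p_i, p_c) is positively oriented and (p_b, p_i, p_c) is negatively oriented; and if (p_a, p_b, p_c) is negatively oriented then (p_a, p_i, p_c) is negatively oriented and (p_b, p_i, p_c) is positively oriented. -/

import Mathlib

/-- Orientation determinant of three points in the plane:
`det [[1,1,1],[pₓ,qₓ,rₓ],[p_y,q_y,r_y]]`.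
The triple `(p,q,r)` is positively oriented iff `det3 p q r > 0`,
and negatively oriented iff `det3 p q r < 0`. -/
noncomputable def det3 (p q r : ℝ × ℝ) : ℝ :=
  Matrix.det !![(1:ℝ), 1, 1; p.1, q.1, r.1; p.2, q.2, r.2]

/-- A set of points in the plane is in general position if no three
distinct points of it are collinear. -/
def InGenPos (S : Set (ℝ × ℝ)) : Prop :=
  ∀ p ∈ S, ∀ q ∈ S, ∀ r ∈ S, p ≠ q → p ≠ r → q ≠ r →
    ¬ Collinear ℝ ({p, q, r} : Set (ℝ × ℝ))

/-- `P` is a `k`-gon of `S`: a `k`-element subset of `S` in convex position,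
i.e. every point of `P` is an extreme point of the convex hull of `P`. -/
def IsGon (k : ℕ) (S P : Set (ℝ × ℝ)) : Prop :=
  P ⊆ S ∧ P.Finite ∧ P.ncard = k ∧
    ∀ p ∈ P, p ∈ Set.extremePoints ℝ (convexHull ℝ P)

/-- `P` is a `k`-hole of `S`: a `k`-gon of `S` whose convex hull contains
no point of `S` other than the `k` points of `P`. -/
def IsHole (k : ℕ) (S P : Set (ℝ × ℝ)) : Prop :=
  IsGon k S P ∧ ∀ q ∈ S, q ∈ convexHull ℝ P → q ∈ P

/-! The barycentric coordinates of `x` with respect to a nondegenerate triangle `a b c` are, by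
Cramer's rule, `det3 x b c / D`, `det3 a x c / D`, `det3 a b x / D` with `D = det3 a b c`, and `x`
is interior exactly when all three are positive. When `a.1 < b.1` and `b.1 < x.1`, `b.1 < c.1`,
the identity `(c.1 - b.1) * det3 a b x = (x.1 - b.1) * D + (b.1 - a.1) * det3 x b c` makes
the third coordinate positive as soon as the first one is, so only the orientations of `(a, x, c)`
and `(b, x, c)` have to be compared with that of `(a, b, c)`. -/

lemma det3_eq (p q r : ℝ × ℝ) :
    det3 p q r = (q.1 - p.1) * (r.2 - p.2) - (q.2 - p.2) * (r.1 - p.1) := by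
  simp only [det3, Matrix.det_fin_three, Matrix.of_apply, Matrix.cons_val', Matrix.cons_val_zero,
    Matrix.cons_val_fin_one, Matrix.cons_val_one, Matrix.cons_val]
  ring

lemma det3_eq_zero_iff_collinear {p q r : ℝ × ℝ} :
    det3 p q r = 0 ↔ Collinear ℝ ({p, q, r} : Set (ℝ × ℝ)) := by
  rw [det3_eq]
  constructor
  · intro h
    rcases eq_or_ne p q with rfl | hpq
    · simpa using collinear_pair ℝ p r
    have hn : (q.1 - p.1) ^ 2 + (q.2 - p.2) ^ 2 ≠ 0 := fun h0 =>
      hpq (Prod.ext (by nlinarith [sq_nonneg (q.1 - p.1), sq_nonneg (q.2 - p.2)])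
        (by nlinarith [sq_nonneg (q.1 - p.1), sq_nonneg (q.2 - p.2)]))
    rw [collinear_iff_of_mem (Set.mem_insert p _)]
    refine ⟨q - p, fun x hx => ?_⟩
    rcases hx with rfl | rfl | rfl
    · exact ⟨0, by simp⟩
    · exact ⟨1, by simp⟩
    · -- the coefficient of the orthogonal projection of `x - p` onto `q - p`
      refine ⟨((x.1 - p.1) * (q.1 - p.1) + (x.2 - p.2) * (q.2 - p.2)) /
        ((q.1 - p.1) ^ 2 + (q.2 - p.2) ^ 2), ?_⟩
      ext <;> simp only [vadd_eq_add, Prod.fst_add, Prod.snd_add, Prod.smul_fst, Prod.smul_snd,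
        Prod.fst_sub, Prod.snd_sub, smul_eq_mul] <;> field_simp
      · linear_combination -(q.2 - p.2) * h
      · linear_combination (q.1 - p.1) * h
  · intro h
    obtain ⟨p₀, v, hv⟩ := (collinear_iff_exists_forall_eq_smul_vadd _).1 h
    obtain ⟨s, rfl⟩ := hv p (by simp)
    obtain ⟨t, rfl⟩ := hv q (by simp)
    obtain ⟨u, rfl⟩ := hv r (by simp)
    simp only [vadd_eq_add, Prod.fst_add, Prod.snd_add, Prod.smul_fst, Prod.smul_snd, smul_eq_mul]
    ring

lemma det3_add_det3_add_det3 (a b c x : ℝ × ℝ) :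
    det3 x b c + det3 a x c + det3 a b x = det3 a b c := by
  simp only [det3_eq]; ring

lemma det3_smul_add_det3_smul_add_det3_smul (a b c x : ℝ × ℝ) :
    det3 x b c • a + det3 a x c • b + det3 a b x • c = det3 a b c • x := by
  ext <;> simp only [det3_eq, Prod.fst_add, Prod.snd_add, Prod.smul_fst, Prod.smul_snd,
    smul_eq_mul] <;> ring

lemma mem_interior_convexHull_triple_iff {a b c : ℝ × ℝ} (h : det3 a b c ≠ 0) (x : ℝ × ℝ) :
    x ∈ interior (convexHull ℝ {a, b, c}) ↔
      0 < det3 x b c / det3 a b c ∧ 0 < det3 a x c / det3 a b c ∧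
        0 < det3 a b x / det3 a b c := by
  have hind : AffineIndependent ℝ ![a, b, c] :=
    affineIndependent_iff_not_collinear_set.2 (mt det3_eq_zero_iff_collinear.2 h)
  let B : AffineBasis (Fin 3) ℝ (ℝ × ℝ) :=
    ⟨![a, b, c], hind, by rw [hind.affineSpan_eq_top_iff_card_eq_finrank_add_one]; simp⟩
  let w : Fin 3 → ℝ :=
    ![det3 x b c / det3 a b c, det3 a x c / det3 a b c, det3 a b x / det3 a b c]
  have hw : ∑ i, w i = 1 := by
    rw [Fin.sum_univ_three]
    change det3 x b c / det3 a b c + det3 a x c / det3 a b c + det3 a b x / det3 a b c = 1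
    rw [← add_div, ← add_div, det3_add_det3_add_det3, div_self h]
  have hx : Finset.univ.affineCombination ℝ B w = x := by
    rw [Finset.affineCombination_eq_linear_combination _ _ _ hw, Fin.sum_univ_three]
    change (det3 x b c / det3 a b c) • a + (det3 a x c / det3 a b c) • b +
      (det3 a b x / det3 a b c) • c = x
    rw [div_eq_inv_mul, div_eq_inv_mul, div_eq_inv_mul, mul_smul, mul_smul, mul_smul,
      ← smul_add, ← smul_add, det3_smul_add_det3_smul_add_det3_smul, inv_smul_smul₀ h]
  have hcoord (i : Fin 3) : B.coord i x = w i :=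
    hx ▸ B.coord_apply_combination_of_mem (Finset.mem_univ i) hw
  have hrange : Set.range B = {a, b, c} := by
    change Set.range ![a, b, c] = _
    rw [Matrix.range_cons, Matrix.range_cons_cons_empty, Set.singleton_union]
  rw [← hrange, B.interior_convexHull]
  simp [hcoord, Fin.forall_fin_succ, w]

lemma det3_div_pos_of_fst_lt {a b c x : ℝ × ℝ} (hab : a.1 < b.1) (hbx : b.1 < x.1)
    (hbc : b.1 < c.1) (hx : 0 < det3 x b c / det3 a b c) : 0 < det3 a b x / det3 a b c := by
  have hD : det3 a b c ≠ 0 := by rintro h; simp [h] at hx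
  have hba := sub_pos.2 hab
  have hxb := sub_pos.2 hbx
  have hcb := sub_pos.2 hbc
  have : det3 a b x / det3 a b c =
      ((x.1 - b.1) + (b.1 - a.1) * (det3 x b c / det3 a b c)) / (c.1 - b.1) := by
    field_simp [hcb.ne']
    simp only [det3_eq]; ring
  rw [this]
  positivity

/-- Characterization of containment in a triangle when the query point lies,
in x-order, between the middle and the rightmost vertex: `pa, pb, pi, pc` have
strictly increasing x-coordinates. -/
theorem inside_triangle_iff_orientations_right (pa pb pi pc : ℝ × ℝ)
    (hgp : InGenPos ({pa, pb, pi, pc} : Set (ℝ × ℝ)))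
    (h1 : pa.1 < pb.1) (h2 : pb.1 < pi.1) (h3 : pi.1 < pc.1) :
    pi ∈ interior (convexHull ℝ ({pa, pb, pc} : Set (ℝ × ℝ))) ↔
      ((det3 pa pb pc > 0 → det3 pa pi pc > 0 ∧ det3 pb pi pc < 0) ∧
       (det3 pa pb pc < 0 → det3 pa pi pc < 0 ∧ det3 pb pi pc > 0)) := by
  have hD : det3 pa pb pc ≠ 0 := fun h =>
    hgp pa (by simp) pb (by simp) pc (by simp) (fun e => h1.ne (congrArg Prod.fst e))
      (fun e => (h1.trans (h2.trans h3)).ne (congrArg Prod.fst e))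
      (fun e => (h2.trans h3).ne (congrArg Prod.fst e)) (det3_eq_zero_iff_collinear.1 h)
  have hswap : det3 pb pi pc = -det3 pi pb pc := by simp only [det3_eq]; ring
  have hthird := det3_div_pos_of_fst_lt (c := pc) h1 h2 (h2.trans h3)
  rw [mem_interior_convexHull_triple_iff hD,
    and_congr_right fun hA => and_iff_left (hthird hA), hswap]
  rcases hD.lt_or_gt with hneg | hpos
  · simp [hneg, hneg.not_gt, div_pos_iff, and_comm]
  · simp [hpos, hpos.not_gt, and_comm]
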